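/- arXiv:math/0605436 — 2 statements merged into one kernel-verified Lean document; each statement's English description precedes it below -/
import Mathlib

section
/- Let β > 0, t_1, t_2 ∈ ℝ, and set a = |t_1|, b = |t_2|. Then (β²/4) ∫_{ℝ²} min( e^{−β(|u_1| + |u_2|)} , e^{−β(|u_1 − t_1| + |u_2 − t_2|)} ) du_1 du_2 = (1 + (β/2) min(a,b)) e^{−(β/2)(a+b)}. -/
/-!
The integrand is `exp (-β * max X Y)`. The map `u ↦ max (c + |u|) (d + |u - t|)` is a V with
slopes `±1`, i.e. `M + |u - s|` with `M = max (max c d) ((c + d + |t|) / 2)`, so integrating out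
`u₂` (with `c = |u₁|`, `d = |u₁ - t₁|`, `t = t₂`) gives `2 / β * exp (-β * M)`. As a function of
`u₁`, this `M` is `(|t₁| + |t₂|) / 2` plus the distance `(p - u₁)⁺ + (u₁ - q)⁺` from `u₁` to an
interval `[p, q]` of length `min |t₁| |t₂|`, and
`∫ exp (-β * ((p - u)⁺ + (u - q)⁺)) = 2 / β + (q - p)`.
-/

open MeasureTheory Set Real

section

variable {β : ℝ}

theorem integrable_and_integral_exp_neg_mul_posPart_add_posPart (hβ : 0 < β) {p q : ℝ}
    (hpq : p ≤ q) :
    Integrable (fun u => exp (-β * ((p - u)⁺ + (u - q)⁺))) ∧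
      ∫ u, exp (-β * ((p - u)⁺ + (u - q)⁺)) = 2 / β + (q - p) := by
  set f := fun u => exp (-β * ((p - u)⁺ + (u - q)⁺))
  have left : EqOn f (fun u => exp (-β * p) * exp (β * u)) (Iic p) := fun u (hu : u ≤ p) => by
    simp only [f, posPart_eq_self.2 (sub_nonneg.2 hu),
      posPart_eq_zero.2 (by linarith : u - q ≤ 0), ← exp_add]
    ring_nf
  have middle : EqOn f (fun _ => 1) (Ioc p q) := fun u hu => by
    simp only [f, posPart_eq_zero.2 (by linarith [hu.1] : p - u ≤ 0),
      posPart_eq_zero.2 (by linarith [hu.2] : u - q ≤ 0), add_zero, mul_zero, exp_zero]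
  have right : EqOn f (fun u => exp (β * q) * exp (-β * u)) (Ioi q) := fun u (hu : q < u) => by
    simp only [f, posPart_eq_zero.2 (by linarith : p - u ≤ 0),
      posPart_eq_self.2 (by linarith : 0 ≤ u - q), ← exp_add]
    ring_nf
  have hL : IntegrableOn f (Iic p) :=
    IntegrableOn.congr_fun ((integrableOn_exp_mul_Iic hβ p).const_mul _) left.symm
      measurableSet_Iic
  have hM : IntegrableOn f (Ioc p q) :=
    (integrableOn_const measure_Ioc_lt_top.ne).congr_fun middle.symm measurableSet_Ioc
  have hR : IntegrableOn f (Ioi q) :=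
    IntegrableOn.congr_fun ((integrableOn_exp_mul_Ioi (neg_lt_zero.2 hβ) q).const_mul _) right.symm
      measurableSet_Ioi
  have hMR : IntegrableOn f (Ioi p) := Ioc_union_Ioi_eq_Ioi hpq ▸ hM.union hR
  refine ⟨integrableOn_univ.1 (Iic_union_Ioi (a := p) ▸ hL.union hMR), ?_⟩
  rw [← intervalIntegral.integral_Iic_add_Ioi hL hMR, ← Ioc_union_Ioi_eq_Ioi hpq,
    setIntegral_union (Ioc_disjoint_Ioi le_rfl) measurableSet_Ioi hM hR,
    setIntegral_congr_fun measurableSet_Iic left, setIntegral_congr_fun measurableSet_Ioc middle,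
    setIntegral_congr_fun measurableSet_Ioi right, integral_const_mul, integral_const_mul,
    integral_exp_mul_Iic hβ, integral_exp_mul_Ioi (neg_lt_zero.2 hβ), setIntegral_const,
    measureReal_def, volume_Ioc, ENNReal.toReal_ofReal (sub_nonneg.2 hpq), smul_eq_mul, mul_one]
  rw [neg_div_neg_eq, ← mul_div_assoc, ← mul_div_assoc, ← exp_add, ← exp_add, neg_mul,
    neg_add_cancel, neg_mul, add_neg_cancel, exp_zero]
  ring

theorem integral_exp_neg_mul_add_posPart_add_posPart (hβ : 0 < β) (m : ℝ) {p q : ℝ}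
    (hpq : p ≤ q) :
    ∫ u, exp (-β * (m + ((p - u)⁺ + (u - q)⁺))) = (2 / β + (q - p)) * exp (-β * m) := by
  simp only [mul_add (-β) m, exp_add (-β * m), integral_const_mul,
    (integrable_and_integral_exp_neg_mul_posPart_add_posPart hβ hpq).2]
  ring

theorem integrable_exp_neg_mul_abs (hβ : 0 < β) : Integrable (fun u : ℝ => exp (-β * |u|)) := by
  simpa [← posPart_add_negPart, negPart_def, add_comm] using
    (integrable_and_integral_exp_neg_mul_posPart_add_posPart hβ le_rfl (p := 0)).1

theorem min_exp_neg_mul (hβ : 0 ≤ β) (x y : ℝ) :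
    min (exp (-β * x)) (exp (-β * y)) = exp (-β * max x y) := by
  have : Antitone fun z : ℝ => exp (-β * z) := fun a b hab =>
    exp_le_exp.2 (mul_le_mul_of_nonpos_left hab (neg_nonpos.2 hβ))
  exact this.map_max.symm

theorem exists_max_add_abs_add_abs_sub_eq (c d t : ℝ) : ∃ s, ∀ u,
    max (c + |u|) (d + |u - t|) = max (max c d) ((c + d + |t|) / 2) + ((s - u)⁺ + (u - s)⁺) := by
  -- `s` is where the branches `c + |u|` and `d + |u - t|` cross, clamped between `0` and `t`.
  rcases le_total 0 t with ht | ht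
  · refine ⟨max 0 (min t ((t + d - c) / 2)), fun u => ?_⟩
    simp only [posPart_def, abs_eq_max_neg]
    grind
  · refine ⟨min 0 (max t ((t + c - d) / 2)), fun u => ?_⟩
    simp only [posPart_def, abs_eq_max_neg]
    grind

theorem integral_min_exp_neg_mul_add_abs (hβ : 0 < β) (c d t : ℝ) :
    ∫ u, min (exp (-β * (c + |u|))) (exp (-β * (d + |u - t|))) =
      2 / β * exp (-β * max (max c d) ((c + d + |t|) / 2)) := by
  obtain ⟨s, hs⟩ := exists_max_add_abs_add_abs_sub_eq c d t
  simp_rw [min_exp_neg_mul hβ.le, hs]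
  rw [integral_exp_neg_mul_add_posPart_add_posPart hβ _ le_rfl, sub_self, add_zero]

theorem exists_max_max_abs_abs_sub_eq (t : ℝ) {b : ℝ} (hb : 0 ≤ b) :
    ∃ p q, q - p = min |t| b ∧ ∀ u,
      max (max |u| |u - t|) ((|u| + |u - t| + b) / 2) = (|t| + b) / 2 + ((p - u)⁺ + (u - q)⁺) := by
  -- `[p, q]` is the segment between `0` and `t` with the part where `max |u| |u - t|`
  -- exceeds `(|t| + b) / 2` cut off at both ends.
  refine ⟨min 0 t + max 0 ((|t| - b) / 2), max 0 t - max 0 ((|t| - b) / 2), ?_, fun u => ?_⟩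
  · simp only [abs_eq_max_neg]
    grind
  · simp only [posPart_def, abs_eq_max_neg]
    grind

theorem integral_exp_neg_mul_max_max_abs_abs_sub (hβ : 0 < β) (t : ℝ) {b : ℝ} (hb : 0 ≤ b) :
    ∫ u, exp (-β * max (max |u| |u - t|) ((|u| + |u - t| + b) / 2)) =
      (2 / β + min |t| b) * exp (-β * ((|t| + b) / 2)) := by
  obtain ⟨p, q, hpq, hf⟩ := exists_max_max_abs_abs_sub_eq t hb
  have hpq' : p ≤ q := by rw [← sub_nonneg, hpq]; positivity
  simp_rw [hf]
  rw [integral_exp_neg_mul_add_posPart_add_posPart hβ _ hpq', hpq]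

theorem integrable_exp_neg_mul_abs_add_abs (hβ : 0 < β) :
    Integrable (fun u : ℝ × ℝ => exp (-β * (|u.1| + |u.2|))) (volume.prod volume) := by
  simpa only [mul_add, exp_add] using
    (integrable_exp_neg_mul_abs hβ).mul_prod (integrable_exp_neg_mul_abs hβ)

end

/-- `R_{0,t}(1,1)` for the two-dimensional exponential model. -/
theorem exponential_model_R (β t₁ t₂ : ℝ) (hβ : 0 < β) :
    (β ^ 2 / 4) * ∫ u : ℝ × ℝ,
        min (Real.exp (-β * (|u.1| + |u.2|)))
          (Real.exp (-β * (|u.1 - t₁| + |u.2 - t₂|))) =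
      (1 + (β / 2) * min |t₁| |t₂|) * Real.exp (-(β / 2) * (|t₁| + |t₂|)) := by
  have hf : Integrable (fun u : ℝ × ℝ => min (exp (-β * (|u.1| + |u.2|)))
      (exp (-β * (|u.1 - t₁| + |u.2 - t₂|)))) (volume.prod volume) := by
    refine (integrable_exp_neg_mul_abs_add_abs hβ).mono' (by fun_prop) (ae_of_all _ fun u => ?_)
    rw [norm_of_nonneg (le_min (exp_pos _).le (exp_pos _).le)]
    exact min_le_left _ _
  rw [Measure.volume_eq_prod, integral_prod _ hf]
  simp_rw [integral_min_exp_neg_mul_add_abs hβ, integral_const_mul,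
    integral_exp_neg_mul_max_max_abs_abs_sub hβ t₁ (abs_nonneg t₂)]
  field_simp
  ring
end

section
/- Let β > 0, t > 0, ν a positive integer, and write the t-density f(u) = c_ν β (1 + β²u²/ν)^{−(ν+1)/2} with c_ν = Γ((ν+1)/2)/(√(πν) Γ(ν/2)). For w_1 = w_2 = w > 0, ∫_{−∞}^{∞} max( f(u)/w , f(u−t)/w ) du = (2/w) F_ν(βt/2), where F_ν is the CDF of the Student t-distribution with ν degrees of freedom. -/
/-!
The scaled t-density `f` is even and decreasing in `|u|`, so `max (f u) (f (u - t))` equals `f u`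
left of the midpoint `t / 2` and `f (u - t)` right of it. Reflecting in `t / 2` shows both halves
equal `∫_{-∞}^{t/2} f`, and the substitution `s = β u` turns this into `F_ν (β t / 2)`.
-/

open MeasureTheory Set

section ChangeOfVariables

variable {E : Type*} [NormedAddCommGroup E] [NormedSpace ℝ E]

theorem integral_comp_sub_right_Ioi (g : ℝ → E) (a b : ℝ) :
    ∫ x in Ioi a, g (x - b) = ∫ x in Ioi (a - b), g x := by
  have h := (measurePreserving_sub_right volume b).setIntegral_preimage_emb
    (measurableEmbedding_subRight b) g (Ioi (a - b))
  rwa [preimage_sub_const_Ioi, sub_add_cancel] at h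

theorem integral_comp_mul_left_Iic (g : ℝ → E) (a : ℝ) {b : ℝ} (hb : 0 < b) :
    ∫ x in Iic a, g (b * x) = b⁻¹ • ∫ x in Iic (b * a), g x := by
  have h := integral_comp_mul_left_Ioi (fun x => g (-x)) (-a) hb
  rw [← integral_comp_neg_Iic] at h
  simpa only [mul_neg, neg_neg, integral_comp_neg_Ioi] using h

end ChangeOfVariables

theorem integral_max_comp_sub_eq_two_mul_setIntegral_Iic {g : ℝ → ℝ} (hg : Integrable g)
    (hmono : ∀ x y, |x| ≤ |y| → g y ≤ g x) {t : ℝ} (ht : 0 ≤ t) :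
    ∫ u, max (g u) (g (u - t)) = 2 * ∫ u in Iic (t / 2), g u := by
  have heven (x : ℝ) : g (-x) = g x :=
    le_antisymm (hmono _ _ (abs_neg x).ge) (hmono _ _ (abs_neg x).le)
  have hmax : Integrable fun u => max (g u) (g (u - t)) := hg.sup (hg.comp_sub_right t)
  have hleft : ∀ u ∈ Iic (t / 2), max (g u) (g (u - t)) = g u := fun u hu =>
    max_eq_left <| hmono _ _ <| sq_le_sq.1 <| by
      nlinarith [mul_nonneg ht (by linarith [mem_Iic.1 hu] : 0 ≤ t - 2 * u)]
  have hright : ∀ u ∈ Ioi (t / 2), max (g u) (g (u - t)) = g (u - t) := fun u hu =>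
    max_eq_right <| hmono _ _ <| sq_le_sq.1 <| by
      nlinarith [mul_nonneg ht (by linarith [mem_Ioi.1 hu] : 0 ≤ 2 * u - t)]
  have hreflect : ∫ u in Ioi (-(t / 2)), g u = ∫ u in Iic (t / 2), g u := by
    simp only [← integral_comp_neg_Iic, heven]
  rw [← intervalIntegral.integral_Iic_add_Ioi hmax.integrableOn hmax.integrableOn,
    setIntegral_congr_fun measurableSet_Iic hleft, setIntegral_congr_fun measurableSet_Ioi hright,
    integral_comp_sub_right_Ioi, show t / 2 - t = -(t / 2) by ring, hreflect, two_mul]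

theorem integrable_one_add_sq_div_rpow {a p : ℝ} (ha : 0 < a) (hp : p < -1 / 2) :
    Integrable fun s : ℝ => (1 + s ^ 2 / a) ^ p := by
  have h := (integrable_rpow_neg_one_add_norm_sq (E := ℝ) (μ := volume) (r := -2 * p)
    (by rw [Module.finrank_self, Nat.cast_one]; linarith)).comp_div (Real.sqrt_pos.2 ha).ne'
  convert h using 2 with s
  rw [Real.norm_eq_abs, sq_abs, div_pow, Real.sq_sqrt ha.le]
  ring_nf

theorem one_add_sq_div_rpow_le_of_abs_le {a p x y : ℝ} (ha : 0 ≤ a) (hp : p ≤ 0)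
    (hxy : |x| ≤ |y|) : (1 + y ^ 2 / a) ^ p ≤ (1 + x ^ 2 / a) ^ p :=
  Real.rpow_le_rpow_of_nonpos (by positivity) (by have := sq_le_sq.2 hxy; gcongr) hp

/-- The exponent measure for the one-dimensional t-model on the diagonal `w₁ = w₂ = w`. -/
theorem t_model_diagonal (β t w : ℝ) (hβ : 0 < β) (ht : 0 < t) (hw : 0 < w)
    (ν : ℕ) (hν : 1 ≤ ν) :
    (fun (c : ℝ) (f : ℝ → ℝ) (F : ℝ → ℝ) =>
        ∫ u, max (f u / w) (f (u - t) / w) = (2 / w) * F (β * t / 2))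
      (Real.Gamma (((ν : ℝ) + 1) / 2) /
        (Real.sqrt (Real.pi * ν) * Real.Gamma ((ν : ℝ) / 2)))
      (fun u : ℝ =>
        (Real.Gamma (((ν : ℝ) + 1) / 2) /
            (Real.sqrt (Real.pi * ν) * Real.Gamma ((ν : ℝ) / 2))) * β *
          (1 + β ^ 2 * u ^ 2 / (ν : ℝ)) ^ (-((ν : ℝ) + 1) / 2))
      (fun x : ℝ =>
        (Real.Gamma (((ν : ℝ) + 1) / 2) /
            (Real.sqrt (Real.pi * ν) * Real.Gamma ((ν : ℝ) / 2))) *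
          ∫ s in Set.Iic x, (1 + s ^ 2 / (ν : ℝ)) ^ (-((ν : ℝ) + 1) / 2)) := by
  have hν0 : (0 : ℝ) < ν := by exact_mod_cast hν
  beta_reduce
  set c : ℝ := Real.Gamma (((ν : ℝ) + 1) / 2) /
    (Real.sqrt (Real.pi * ν) * Real.Gamma ((ν : ℝ) / 2))
  set p : ℝ := -((ν : ℝ) + 1) / 2
  have hp : p < -1 / 2 := by simp only [p]; linarith
  set h : ℝ → ℝ := fun s => (1 + s ^ 2 / ν) ^ p
  have hc : 0 < c := by positivity
  set g : ℝ → ℝ := fun u => c * β / w * h (β * u)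
  have hf (u : ℝ) : c * β * (1 + β ^ 2 * u ^ 2 / ν) ^ p / w = g u := by
    simp only [g, h, mul_pow]
    ring
  have hg : Integrable g :=
    ((integrable_one_add_sq_div_rpow hν0 hp).comp_mul_left' hβ.ne').const_mul _
  have hmono (x y : ℝ) (hxy : |x| ≤ |y|) : g y ≤ g x := by
    refine mul_le_mul_of_nonneg_left (one_add_sq_div_rpow_le_of_abs_le hν0.le (by linarith) ?_)
      (by positivity)
    simpa only [abs_mul, abs_of_pos hβ] using mul_le_mul_of_nonneg_left hxy hβ.le
  simp only [hf]
  rw [integral_max_comp_sub_eq_two_mul_setIntegral_Iic hg hmono ht.le, integral_const_mul,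
    integral_comp_mul_left_Iic h _ hβ, smul_eq_mul]
  field_simp
end
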